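/- With the setup of the order ≤_O (I, J, K pairwise disjoint and disconnected, σ : W_I → W_J an isomorphism x ↦ x*): if w, w₁ ∈ W(I,J,K) satisfy w ≤_O w₁, then for every w₂ in the coset w₁ W_K W_{I,J} there exists v in the coset w W_K W_{I,J} with v ≤ w₂ in Bruhat order. -/

import Mathlib

/-!
Write `w₂ = w₁ a (x x*)` with `a ∈ W_K`, `x ∈ W_I`, and let `u ∈ [w]` with `u ≤ w₁`. Bruhat
order lifts along right multiplication by a simple reflection `s`: if `u ≤ z` then `u ≤ z s` or
`u s ≤ z s`, and if `z < z s` then both hold. Climb from `w₁` to `w₁ x x*` along a reduced word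
of `x`, one pair `sᵢ sᵢ*` at a time: the prefix `w₁ x' sᵢ` stays a minimal `W_J`-coset
representative and `σ` preserves length, so `sᵢ*` is always an ascent, and the element of `[w]`
below the current point is either kept or multiplied by `sᵢ sᵢ*`, which keeps it in `[w]`. Then
climb along a word of `a`, which commutes with `x x*`; each letter `s_k` is kept or absorbed
into the `W_K` part. The lifting property itself comes from the strong exchange condition,
proved with the reflection cocycle, and from the equivalence of the subword and chain
descriptions of Bruhat order.
-/

section BruhatSetup

variable {B : Type*} {W : Type*} [Group W] {M : CoxeterMatrix B}

/-- Strong Bruhat order: `u ≤ v` iff every reduced word for `v` has a sublist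
that is a reduced word for `u`. -/
def BruhatLE (cs : CoxeterSystem M W) (u v : W) : Prop :=
  ∀ ω : List B, cs.IsReduced ω → cs.wordProd ω = v →
    ∃ ω' : List B, List.Sublist ω' ω ∧ cs.IsReduced ω' ∧ cs.wordProd ω' = u

/-- Strict strong Bruhat order. -/
def BruhatLT (cs : CoxeterSystem M W) (u v : W) : Prop :=
  BruhatLE cs u v ∧ u ≠ v

/-- The standard parabolic subgroup `W_L` generated by the simple reflections in `L`. -/
def parab (cs : CoxeterSystem M W) (L : Set B) : Subgroup W :=
  Subgroup.closure (cs.simple '' L)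

/-- The set `W^L` of minimal length coset representatives for `W / W_L`. -/
def minReps (cs : CoxeterSystem M W) (L : Set B) : Set W :=
  {w : W | ∀ i ∈ L, cs.length w < cs.length (w * cs.simple i)}

/-- Right weak order: `v ≤_R w` iff `ℓ(w) = ℓ(w v⁻¹) + ℓ(v)`. -/
def leR (cs : CoxeterSystem M W) (v w : W) : Prop :=
  cs.length w = cs.length (w * v⁻¹) + cs.length v

/-- The setup of the order `≤_O`: `I`, `J`, `K` are pairwise disjoint and pairwise
disconnected subsets of the simple system (so that `W_{I∪J∪K} = W_I × W_J × W_K`),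
and `σ : x ↦ x*` restricts to an isomorphism of Coxeter groups `W_I → W_J`
(a bijective group homomorphism sending simple reflections to simple reflections). -/
structure GoodSetup (cs : CoxeterSystem M W) (I J K : Set B) (σ : W → W) : Prop where
  disjIJ : Disjoint I J
  disjIK : Disjoint I K
  disjJK : Disjoint J K
  commIJ : ∀ i ∈ I, ∀ j ∈ J, Commute (cs.simple i) (cs.simple j)
  commIK : ∀ i ∈ I, ∀ k ∈ K, Commute (cs.simple i) (cs.simple k)
  commJK : ∀ j ∈ J, ∀ k ∈ K, Commute (cs.simple j) (cs.simple k)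
  directProd : ∀ x ∈ parab cs I, ∀ y ∈ parab cs J, ∀ z ∈ parab cs K,
    x * y * z = 1 → x = 1 ∧ y = 1 ∧ z = 1
  mulSigma : ∀ x ∈ parab cs I, ∀ y ∈ parab cs I, σ (x * y) = σ x * σ y
  bijSigma : Set.BijOn σ (parab cs I : Set W) (parab cs J : Set W)
  simpleSigma : ∀ i ∈ I, ∃ j ∈ J, σ (cs.simple i) = cs.simple j

/-- Membership in the coset `[w] = w · W_K · W_{I,J}` where `W_{I,J} = {x x* : x ∈ W_I}`. -/
def inCoset (cs : CoxeterSystem M W) (I K : Set B) (σ : W → W) (w u : W) : Prop :=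
  ∃ a ∈ parab cs K, ∃ x ∈ parab cs I, u = w * a * (x * σ x)

/-- The relation `≤_O`: `w' ≤_O w` iff some `u ∈ [w']` satisfies `u ≤ w` in Bruhat order. -/
def leO (cs : CoxeterSystem M W) (I K : Set B) (σ : W → W) (w' w : W) : Prop :=
  ∃ u, inCoset cs I K σ w' u ∧ BruhatLE cs u w

/-- The strict relation associated to `≤_O`. -/
def ltO (cs : CoxeterSystem M W) (I K : Set B) (σ : W → W) (w' w : W) : Prop :=
  leO cs I K σ w' w ∧ w' ≠ w

/-- `Min(w)`: the elements of the coset `[w]` of length `ℓ(w)`. -/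
def MinC (cs : CoxeterSystem M W) (I K : Set B) (σ : W → W) (w : W) : Set W :=
  {u : W | inCoset cs I K σ w u ∧ cs.length u = cs.length w}

/-- The set `M` of all elements having minimal length in their coset mod `W_K W_{I,J}`. -/
def Mset (cs : CoxeterSystem M W) (I J K : Set B) (σ : W → W) : Set W :=
  {u : W | ∃ w ∈ minReps cs (J ∪ K), u ∈ MinC cs I K σ w}

namespace CoxeterSystem

open scoped Classical

variable (cs : CoxeterSystem M W)

local prefix:100 "s " => cs.simple
local prefix:100 "π " => cs.wordProd
local prefix:100 "ℓ " => cs.length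
local prefix:100 "ris " => cs.rightInvSeq

-- The action of `sᵢ` on reflections with signs (Björner–Brenti, Thm. 1.3.11), from which the
-- strong exchange condition follows.
noncomputable def cocycleStep (i : B) : Function.End (W × ZMod 2) :=
  fun p => (s i * p.1 * s i, p.2 + if p.1 = s i then 1 else 0)

private theorem simple_conj_eq_iff (i : B) {x y : W} : s i * x * s i = y ↔ x = s i * y * s i := by
  constructor
  · rintro rfl; simp [mul_assoc]
  · rintro rfl; simp [mul_assoc]

theorem cocycleStep_mul_pow_apply (i j : B) (k : ℕ) (p : W × ZMod 2) :
    ((cocycleStep cs i * cocycleStep cs j) ^ k) p =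
      ((s i * s j) ^ k * p.1 * ((s i * s j) ^ k)⁻¹,
        p.2 + ∑ h ∈ Finset.range (2 * k), if p.1 = (s j * s i) ^ h * s j then 1 else 0) := by
  induction k generalizing p with
  | zero => simp; rfl
  | succ k ih =>
    rw [pow_succ]
    change ((cocycleStep cs i * cocycleStep cs j) ^ k) (cocycleStep cs i (cocycleStep cs j p)) = _
    rw [ih]
    simp only [cocycleStep]
    have hshift (h : ℕ) : (s i * (s j * p.1 * s j) * s i = (s j * s i) ^ h * s j) ↔
        p.1 = (s j * s i) ^ (h + 1 + 1) * s j := by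
      rw [simple_conj_eq_iff, simple_conj_eq_iff, pow_succ, pow_succ']
      simp only [mul_assoc]
    have h1 : (s j * p.1 * s j = s i) ↔ p.1 = (s j * s i) ^ (0 + 1) * s j := by
      rw [simple_conj_eq_iff, zero_add, pow_one]
    refine Prod.ext ?_ ?_
    · simp only [pow_succ, mul_inv_rev, inv_simple, mul_assoc]
    · rw [Nat.mul_succ, Finset.sum_range_succ' _ (2 * k + 1), Finset.sum_range_succ' _ (2 * k)]
      simp only [hshift, h1, pow_zero, one_mul]
      ring

theorem isLiftable_cocycleStep : M.IsLiftable (cocycleStep cs) := by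
  intro i j
  funext p
  rw [cocycleStep_mul_pow_apply, simple_mul_simple_pow, two_mul, Finset.sum_range_add]
  simp only [pow_add, simple_mul_simple_pow', one_mul, inv_one, mul_one, CharTwo.add_self_eq_zero,
    add_zero]
  rfl

noncomputable def cocycleRep : W →* Function.End (W × ZMod 2) :=
  cs.lift ⟨cocycleStep cs, isLiftable_cocycleStep cs⟩

theorem cocycleRep_wordProd_apply (ω : List B) (p : W × ZMod 2) :
    cocycleRep cs (π ω) p = (π ω * p.1 * (π ω)⁻¹, p.2 + (ris ω).count p.1) := by
  induction ω generalizing p with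
  | nil => simp; rfl
  | cons i ω ih =>
    rw [wordProd_cons, map_mul]
    change cocycleRep cs (s i) (cocycleRep cs (π ω) p) = _
    rw [ih, cocycleRep, lift_apply_simple]
    refine Prod.ext ?_ ?_
    · simp only [cocycleStep, mul_inv_rev, inv_simple, mul_assoc]
    · have hcond : (π ω * p.1 * (π ω)⁻¹ = s i) ↔ ((π ω)⁻¹ * s i * π ω == p.1) := by
        rw [beq_iff_eq]
        constructor <;> intro h <;> rw [← h] <;> group
      simp only [cocycleStep, rightInvSeq, List.count_cons, hcond, Nat.cast_add, Nat.cast_ite,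
        Nat.cast_one, Nat.cast_zero, add_assoc]

noncomputable def cocycle (w t : W) : ZMod 2 := (cocycleRep cs w (t, 0)).2

theorem cocycleRep_apply (w : W) (p : W × ZMod 2) :
    cocycleRep cs w p = (w * p.1 * w⁻¹, p.2 + cocycle cs w p.1) := by
  obtain ⟨ω, rfl⟩ := cs.wordProd_surjective w
  simp [cocycle, cocycleRep_wordProd_apply]

theorem cocycle_wordProd (ω : List B) (t : W) : cocycle cs (π ω) t = (ris ω).count t := by
  simp [cocycle, cocycleRep_wordProd_apply]

theorem cocycleRep_mul_apply (v w : W) (p : W × ZMod 2) :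
    cocycleRep cs (v * w) p = cocycleRep cs v (cocycleRep cs w p) := by
  rw [map_mul]; rfl

theorem cocycleRep_apply_self {t : W} (ht : cs.IsReflection t) :
    cocycleRep cs t (t, 0) = (t, 1) := by
  obtain ⟨q, i, rfl⟩ := ht
  have hq : q⁻¹ * (q * s i * q⁻¹) * q⁻¹⁻¹ = s i := by group
  have hsimple : cocycleRep cs (s i) (s i, cocycle cs q⁻¹ (q * s i * q⁻¹)) =
      (s i, cocycle cs q⁻¹ (q * s i * q⁻¹) + 1) := by
    rw [cocycleRep, lift_apply_simple]
    simp [cocycleStep]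
  have hcancel := cocycleRep_mul_apply cs q⁻¹ q (s i, 0)
  rw [inv_mul_cancel, map_one] at hcancel
  change (s i, 0) = _ at hcancel
  simp only [cocycleRep_apply, hq, zero_add, Prod.mk.injEq, true_and] at hcancel
  rw [cocycleRep_mul_apply, cocycleRep_mul_apply, cocycleRep_apply cs q⁻¹]
  simp only [hq, zero_add]
  rw [hsimple, cocycleRep_apply]
  refine Prod.ext rfl ?_
  linear_combination -hcancel

theorem mem_rightInvSeq_of_isRightInversion (ω : List B) {t : W}
    (ht : cs.IsRightInversion (π ω) t) : t ∈ ris ω := by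
  obtain ⟨ζ, hζ, hζω⟩ := cs.exists_isReduced (π ω * t)
  by_contra hnot
  have key : cocycle cs (π ω * t) t = 1 + cocycle cs (π ω) t := by
    have := congrArg Prod.snd (cocycleRep_mul_apply cs (π ω) t (t, 0))
    rw [cocycleRep_apply_self cs ht.1, cocycleRep_apply cs (π ω)] at this
    exact this
  rw [hζω, cocycle_wordProd, cocycle_wordProd, List.count_eq_zero_of_not_mem hnot] at key
  have hmem : t ∈ ris ζ := by
    by_contra h
    rw [List.count_eq_zero_of_not_mem h] at key
    exact absurd key (by decide)
  have hlt := (cs.isRightInversion_of_mem_rightInvSeq hζ hmem).2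
  rw [← hζω, mul_assoc, ht.1.mul_self, mul_one] at hlt
  exact lt_asymm ht.2 hlt

theorem exists_eraseIdx_of_isRightInversion (ω : List B) {t : W}
    (ht : cs.IsRightInversion (π ω) t) : ∃ j < ω.length, π ω * t = π (ω.eraseIdx j) := by
  obtain ⟨j, hj, rfl⟩ := List.getElem_of_mem (mem_rightInvSeq_of_isRightInversion cs ω ht)
  refine ⟨j, by simpa using hj, ?_⟩
  rw [← List.getD_eq_getElem _ 1 hj, wordProd_mul_getD_rightInvSeq]

theorem isReduced_append_singleton_iff (ω : List B) (i : B) :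
    cs.IsReduced (ω ++ [i]) ↔ cs.IsReduced ω ∧ ℓ (π ω) < ℓ (π ω * s i) := by
  have hle := cs.length_wordProd_le ω
  have := cs.length_mul_simple (π ω) i
  simp only [IsReduced, wordProd_append, wordProd_singleton, List.length_append,
    List.length_singleton]
  omega

theorem exists_reduced_sublist (ω : List B) :
    ∃ ω', List.Sublist ω' ω ∧ cs.IsReduced ω' ∧ π ω' = π ω := by
  induction ω using List.reverseRecOn with
  | nil => exact ⟨[], .slnil, by simp [IsReduced], rfl⟩
  | append_singleton ζ d ih =>
    obtain ⟨ζ₀, hsub, hred, hprod⟩ := ih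
    have hprod' : π (ζ ++ [d]) = π ζ₀ * s d := by
      rw [wordProd_append, wordProd_singleton, hprod]
    rcases cs.length_mul_simple (π ζ₀) d with hup | hdown
    · exact ⟨ζ₀ ++ [d], hsub.append (.refl _),
        (isReduced_append_singleton_iff cs ζ₀ d).2 ⟨hred, by omega⟩,
        by rw [hprod', wordProd_append, wordProd_singleton]⟩
    · obtain ⟨j, hj, hex⟩ :=
        exists_eraseIdx_of_isRightInversion cs ζ₀ ⟨cs.isReflection_simple d, by omega⟩
      refine ⟨ζ₀.eraseIdx j,
        ((ζ₀.eraseIdx_sublist j).trans hsub).trans (List.sublist_append_left _ _), ?_,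
        by rw [hprod', hex]⟩
      have := List.length_eraseIdx_add_one hj
      have : ℓ (π ζ₀) = ζ₀.length := hred
      show ℓ (π (ζ₀.eraseIdx j)) = _
      rw [← hex]
      omega

variable {cs} in
theorem IsRightInversion.of_mul_of_length_mul_eq {m b t : W}
    (ht : cs.IsRightInversion (m * b) t) (hmb : ℓ (m * b) = ℓ m + ℓ b) :
    cs.IsRightInversion b t ∨ cs.IsRightInversion m (b * t * b⁻¹) := by
  obtain ⟨ζ, hζ, rfl⟩ := cs.exists_isReduced m
  obtain ⟨ζ', hζ', rfl⟩ := cs.exists_isReduced b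
  rw [← wordProd_append] at ht
  obtain ⟨j, hj, hex⟩ := cs.exists_eraseIdx_of_isRightInversion (ζ ++ ζ') ht
  have hj' : j < ζ.length + ζ'.length := by simpa using hj
  have hζlen : ℓ (π ζ) = ζ.length := hζ
  have hζ'len : ℓ (π ζ') = ζ'.length := hζ'
  rw [wordProd_append] at hex
  rcases lt_or_ge j ζ.length with hjζ | hjζ
  · right
    rw [List.eraseIdx_append_of_lt_length hjζ, wordProd_append] at hex
    have hm : π ζ * (π ζ' * t * (π ζ')⁻¹) = π (ζ.eraseIdx j) := by
      rw [← mul_assoc, ← mul_assoc, hex, mul_inv_cancel_right]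
    refine ⟨ht.1.conj _, ?_⟩
    have := cs.length_wordProd_le (ζ.eraseIdx j)
    have := List.length_eraseIdx_add_one hjζ
    rw [hm]
    omega
  · left
    rw [List.eraseIdx_append_of_length_le hjζ, wordProd_append, mul_assoc] at hex
    refine ⟨ht.1, ?_⟩
    have := cs.length_wordProd_le (ζ'.eraseIdx (j - ζ.length))
    have := List.length_eraseIdx_add_one (show j - ζ.length < ζ'.length by omega)
    rw [mul_left_cancel hex]
    omega

inductive ChainLE : W → W → Prop
  | refl (w : W) : ChainLE w w
  | step {u v t : W} :
      ChainLE u v → cs.IsReflection t → ℓ v < ℓ (v * t) → ChainLE u (v * t)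

variable {cs}

theorem ChainLE.trans {u v w : W} (huv : ChainLE cs u v) (hvw : ChainLE cs v w) :
    ChainLE cs u w := by
  induction hvw with
  | refl => exact huv
  | step _ ht hlt ih => exact ih.step ht hlt

theorem ChainLE.length_le {u v : W} (h : ChainLE cs u v) : ℓ u ≤ ℓ v := by
  induction h with
  | refl => rfl
  | step _ _ hlt ih => omega

theorem chainLE_mul_simple_of_length_lt {w : W} {i : B} (h : ℓ w < ℓ (w * s i)) :
    ChainLE cs w (w * s i) :=
  (ChainLE.refl w).step (cs.isReflection_simple i) h

theorem mul_simple_chainLE_of_length_lt {w : W} {i : B} (h : ℓ (w * s i) < ℓ w) :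
    ChainLE cs (w * s i) w := by
  simpa using chainLE_mul_simple_of_length_lt (cs := cs) (w := w * s i) (i := i)
    (by simpa using h)

theorem ChainLE.step_mul_simple {u c t : W} {i : B} (h : ChainLE cs u (c * s i))
    (ht : cs.IsReflection t) (hlt : ℓ (c * s i) < ℓ (c * t * s i)) :
    ChainLE cs u (c * t * s i) := by
  have hconj : c * s i * (s i * t * s i) = c * t * s i := by simp [mul_assoc]
  have := h.step (by simpa using ht.conj (s i)) (hconj ▸ hlt)
  rwa [hconj] at this

theorem eq_simple_of_isRightInversion_simple {i : B} {t : W}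
    (h : cs.IsRightInversion (s i) t) : t = s i := by
  have hlt := h.2
  rw [length_simple] at hlt
  have h1 : s i * t = 1 := cs.length_eq_zero_iff.1 (by omega)
  rw [eq_inv_of_mul_eq_one_right h1, inv_simple]

theorem ChainLE.lift_of_descent {a b : W} {i : B} (hab : ChainLE cs a b)
    (hb : ℓ (b * s i) < ℓ b) :
    (ℓ (a * s i) < ℓ a → ChainLE cs (a * s i) (b * s i)) ∧
      (ℓ a < ℓ (a * s i) → ChainLE cs a (b * s i)) := by
  induction hab with
  | refl => exact ⟨fun _ => .refl _, fun h => absurd hb (lt_asymm h)⟩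
  | @step c t hac ht hct ih =>
    have hcts := cs.length_mul_simple (c * t) i
    rcases cs.length_mul_simple c i with hc | hc
    · -- Exchange in `(c t sᵢ) sᵢ = c t`: either `t = sᵢ`, or `ℓ (c sᵢ) < ℓ (c t sᵢ)`.
      have key : ChainLE cs c (c * t * s i) := by
        have hinv : cs.IsRightInversion (c * t * s i * s i) t :=
          ⟨ht, by simpa [mul_assoc, ht.mul_self]⟩
        rcases hinv.of_mul_of_length_mul_eq
          (by rw [simple_mul_simple_cancel_right, length_simple]; omega) with h | h
        · rw [eq_simple_of_isRightInversion_simple h, simple_mul_simple_cancel_right]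
          exact .refl c
        · have h2 := h.2
          have hcs : c * t * s i * (s i * t * s i) = c * s i := by
            simp only [mul_assoc, simple_mul_simple_cancel_left]
            rw [← mul_assoc t, ht.mul_self, one_mul]
          rw [inv_simple, hcs] at h2
          exact (chainLE_mul_simple_of_length_lt (by omega)).step_mul_simple ht h2
      exact ⟨fun ha => ((mul_simple_chainLE_of_length_lt ha).trans hac).trans key,
        fun _ => hac.trans key⟩
    · have hlt : ℓ (c * s i) < ℓ (c * t * s i) := by omega
      obtain ⟨ih₁, ih₂⟩ := ih (by omega)
      exact ⟨fun ha => (ih₁ ha).step_mul_simple ht hlt,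
        fun ha => (ih₂ ha).step_mul_simple ht hlt⟩

theorem ChainLE.mul_simple_of_ascent {a b : W} {i : B} (hab : ChainLE cs a b)
    (hb : ℓ b < ℓ (b * s i)) (ha : ℓ a < ℓ (a * s i)) : ChainLE cs (a * s i) (b * s i) := by
  induction hn : ℓ b using Nat.strong_induction_on generalizing a b with
  | _ n ih =>
  cases hab with
  | refl => exact .refl _
  | @step c t hac ht hct =>
    rcases cs.length_mul_simple c i with hc | hc
    · exact (ih _ (by omega) hac (by omega) ha rfl).step_mul_simple ht (by omega)
    · have hac' := (hac.lift_of_descent (by omega)).2 ha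
      have := ih _ (by omega) hac' (by rw [simple_mul_simple_cancel_right]; omega) ha rfl
      rw [simple_mul_simple_cancel_right] at this
      exact (this.step ht hct).trans (chainLE_mul_simple_of_length_lt hb)

theorem chainLE_wordProd_of_sublist {ω ω' : List B} (hω : cs.IsReduced ω)
    (hsub : List.Sublist ω' ω) (hω' : cs.IsReduced ω') : ChainLE cs (π ω') (π ω) := by
  induction ω using List.reverseRecOn generalizing ω' with
  | nil =>
    rw [List.sublist_nil.1 hsub]
    exact .refl _
  | append_singleton ζ d ih =>
    obtain ⟨hζ, hasc⟩ := (cs.isReduced_append_singleton_iff ζ d).1 hω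
    rw [wordProd_append, wordProd_singleton]
    obtain ⟨x, y, rfl, hx, hy⟩ := List.sublist_append_iff.1 hsub
    rcases List.sublist_singleton.1 hy with rfl | rfl
    · rw [List.append_nil] at hω' ⊢
      exact (ih hζ hx hω').trans (chainLE_mul_simple_of_length_lt hasc)
    · obtain ⟨hx', hasc'⟩ := (cs.isReduced_append_singleton_iff x d).1 hω'
      rw [wordProd_append, wordProd_singleton]
      exact (ih hζ hx hx').mul_simple_of_ascent hasc hasc'

theorem ChainLE.bruhatLE {u v : W} (h : ChainLE cs u v) : BruhatLE cs u v := by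
  induction h with
  | refl => exact fun ω hω hprod => ⟨ω, .refl _, hω, hprod⟩
  | @step v t _ ht hlt ih =>
    intro ω hω hprod
    have hv : π ω * t = v := by rw [hprod, mul_assoc, ht.mul_self, mul_one]
    obtain ⟨j, -, hex⟩ :=
      cs.exists_eraseIdx_of_isRightInversion ω ⟨ht, by rwa [hv, hprod]⟩
    obtain ⟨ζ, hζsub, hζ, hζprod⟩ := cs.exists_reduced_sublist (ω.eraseIdx j)
    obtain ⟨ω', hsub, hω', hω'prod⟩ := ih ζ hζ (by rw [hζprod, ← hex, hv])
    exact ⟨ω', (hsub.trans hζsub).trans (ω.eraseIdx_sublist j), hω', hω'prod⟩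

theorem bruhatLE_iff_chainLE {u v : W} : BruhatLE cs u v ↔ ChainLE cs u v := by
  refine ⟨fun h => ?_, ChainLE.bruhatLE⟩
  obtain ⟨ω, hω, rfl⟩ := cs.exists_isReduced v
  obtain ⟨ω', hsub, hω', rfl⟩ := h ω hω rfl
  exact chainLE_wordProd_of_sublist hω hsub hω'

theorem _root_.BruhatLE.le_mul_simple {u w : W} {i : B} (h : BruhatLE cs u w)
    (hw : ℓ w < ℓ (w * s i)) : BruhatLE cs u (w * s i) := by
  rw [bruhatLE_iff_chainLE] at h ⊢
  exact h.trans (chainLE_mul_simple_of_length_lt hw)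

theorem _root_.BruhatLE.mul_simple_le_mul_simple {u w : W} {i : B} (h : BruhatLE cs u w)
    (hw : ℓ w < ℓ (w * s i)) : BruhatLE cs (u * s i) (w * s i) := by
  rw [bruhatLE_iff_chainLE] at h ⊢
  rcases cs.length_mul_simple u i with hu | hu
  · exact h.mul_simple_of_ascent hw (by omega)
  · exact (mul_simple_chainLE_of_length_lt (by omega)).trans
      (h.trans (chainLE_mul_simple_of_length_lt hw))

theorem _root_.BruhatLE.le_mul_simple_or_mul_simple_le {u w : W} (h : BruhatLE cs u w) (i : B) :
    BruhatLE cs u (w * s i) ∨ BruhatLE cs (u * s i) (w * s i) := by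
  rcases cs.length_mul_simple w i with hw | hw
  · exact .inl (h.le_mul_simple (by omega))
  rw [bruhatLE_iff_chainLE, bruhatLE_iff_chainLE]
  obtain ⟨h₁, h₂⟩ := ((bruhatLE_iff_chainLE).1 h).lift_of_descent (i := i) (by omega)
  rcases cs.length_mul_simple u i with hu | hu
  · exact .inl (h₂ (by omega))
  · exact .inr (h₁ (by omega))

section Parabolic

variable (cs) {L : Set B}

theorem simple_mem_parab {i : B} (hi : i ∈ L) : s i ∈ parab cs L :=
  Subgroup.subset_closure ⟨i, hi, rfl⟩

theorem wordProd_mem_parab {ω : List B} (hω : ∀ c ∈ ω, c ∈ L) : π ω ∈ parab cs L := by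
  induction ω with
  | nil => exact one_mem _
  | cons i ω ih =>
    rw [wordProd_cons]
    exact mul_mem (cs.simple_mem_parab (hω i (by simp))) (ih fun c hc => hω c (by simp [hc]))

theorem exists_reduced_word_of_mem_parab {x : W} (hx : x ∈ parab cs L) :
    ∃ ω : List B, (∀ c ∈ ω, c ∈ L) ∧ cs.IsReduced ω ∧ π ω = x := by
  suffices ∃ ω : List B, (∀ c ∈ ω, c ∈ L) ∧ π ω = x by
    obtain ⟨ω, hωL, rfl⟩ := this
    obtain ⟨ω', hsub, hω', hprod⟩ := cs.exists_reduced_sublist ω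
    exact ⟨ω', fun c hc => hωL c (hsub.subset hc), hω', hprod⟩
  induction hx using Subgroup.closure_induction with
  | mem _ h =>
    obtain ⟨i, hi, rfl⟩ := h
    exact ⟨[i], by simpa using hi, wordProd_singleton cs i⟩
  | one => exact ⟨[], by simp, wordProd_nil cs⟩
  | mul _ _ _ _ h₁ h₂ =>
    obtain ⟨ω₁, hω₁, rfl⟩ := h₁
    obtain ⟨ω₂, hω₂, rfl⟩ := h₂
    exact ⟨ω₁ ++ ω₂, fun c hc => (List.mem_append.1 hc).elim (hω₁ c) (hω₂ c),
      wordProd_append cs ω₁ ω₂⟩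
  | inv _ _ h =>
    obtain ⟨ω, hω, rfl⟩ := h
    exact ⟨ω.reverse, fun c hc => hω c (List.mem_reverse.1 hc), wordProd_reverse cs ω⟩

@[elab_as_elim]
theorem parab_induction {P : (x : W) → x ∈ parab cs L → Prop} (one : P 1 (one_mem _))
    (mul : ∀ x hx, ∀ c (hc : c ∈ L), ℓ x < ℓ (x * s c) → P x hx →
      P (x * s c) (mul_mem hx (cs.simple_mem_parab hc)))
    {x : W} (hx : x ∈ parab cs L) : P x hx := by
  obtain ⟨ω, hωL, hω, rfl⟩ := cs.exists_reduced_word_of_mem_parab hx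
  induction ω using List.reverseRecOn with
  | nil => simpa using one
  | append_singleton ζ d ih =>
    have hζL : ∀ c ∈ ζ, c ∈ L := fun c hc => hωL c (by simp [hc])
    obtain ⟨hζ, hasc⟩ := (cs.isReduced_append_singleton_iff ζ d).1 hω
    simp only [wordProd_append, wordProd_singleton]
    exact mul _ (cs.wordProd_mem_parab hζL) d (hωL d (by simp)) hasc
      (ih hζL hζ (cs.wordProd_mem_parab hζL))

theorem exists_simple_eq_of_simple_mem_parab {j : B} (hj : s j ∈ parab cs L) :
    ∃ l ∈ L, s l = s j := by
  obtain ⟨ω, hωL, hω, hprod⟩ := cs.exists_reduced_word_of_mem_parab hj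
  have hlen : ω.length = 1 := by rw [← hω.eq, hprod, length_simple]
  obtain ⟨l, rfl⟩ := List.length_eq_one_iff.1 hlen
  exact ⟨l, hωL l (by simp), by simpa using hprod⟩

variable {cs} in
theorem commute_of_mem_parab {L' : Set B} (hcomm : ∀ i ∈ L, ∀ j ∈ L', Commute (s i) (s j))
    {x y : W} (hx : x ∈ parab cs L) (hy : y ∈ parab cs L') : Commute x y := by
  have hle : parab cs L ≤ Subgroup.centralizer (parab cs L') := by
    rw [parab, parab, Subgroup.centralizer_closure, Subgroup.closure_le]
    rintro _ ⟨i, hi, rfl⟩ _ ⟨j, hj, rfl⟩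
    exact (hcomm i hi j hj).eq.symm
  exact (hle hx y hy).symm

end Parabolic

section MinReps

variable {L : Set B} {m : W}

theorem chainLE_mul_of_mem_minReps (hm : m ∈ minReps cs L) {y : W} (hy : y ∈ parab cs L) :
    ChainLE cs m (m * y) := by
  induction hy using cs.parab_induction with
  | one => simpa using ChainLE.refl m
  | mul y _ c hc _ ih =>
    rw [← mul_assoc]
    rcases cs.length_mul_simple (m * y) c with h | h
    · exact ih.trans (chainLE_mul_simple_of_length_lt (by omega))
    · exact (ih.lift_of_descent (by omega)).2 (hm c hc)

theorem length_le_length_mul_of_mem_minReps (hm : m ∈ minReps cs L) {y : W}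
    (hy : y ∈ parab cs L) : ℓ m ≤ ℓ (m * y) :=
  (chainLE_mul_of_mem_minReps hm hy).length_le

theorem length_mul_of_mem_minReps (hm : m ∈ minReps cs L) {y : W} (hy : y ∈ parab cs L) :
    ℓ (m * y) = ℓ m + ℓ y := by
  induction hy using cs.parab_induction with
  | one => simp
  | mul y hy c hc hasc ih =>
    rw [← mul_assoc]
    have hyc := cs.length_mul_simple y c
    rcases cs.length_mul_simple (m * y) c with h | h
    · omega
    · exfalso
      have hinv : cs.IsRightInversion (m * y) (s c) := ⟨cs.isReflection_simple c, by omega⟩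
      rcases hinv.of_mul_of_length_mul_eq ih with h' | h'
      · exact absurd h'.2 (by omega)
      · have hconj : y * s c * y⁻¹ ∈ parab cs L :=
          mul_mem (mul_mem hy (cs.simple_mem_parab hc)) (inv_mem hy)
        exact absurd h'.2 (not_lt.2 (length_le_length_mul_of_mem_minReps hm hconj))

theorem mul_simple_mem_minReps (hm : m ∈ minReps cs L) {i : B}
    (hcomm : ∀ l ∈ L, Commute (s i) (s l)) (hne : ∀ l ∈ L, s i ≠ s l) :
    m * s i ∈ minReps cs L := by
  intro l hl
  rw [mul_assoc, (hcomm l hl).eq, ← mul_assoc]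
  have hml := hm l hl
  have hmli := cs.length_mul_simple (m * s l) i
  rcases cs.length_mul_simple m i with hi | hi
  · by_contra hle
    have hinv : cs.IsRightInversion (m * s l) (s i) := ⟨cs.isReflection_simple i, by
      have := cs.length_mul_simple m l
      omega⟩
    rcases hinv.of_mul_of_length_mul_eq
      (by have := cs.length_mul_simple m l; rw [length_simple]; omega) with h | h
    · exact hne l hl (eq_simple_of_isRightInversion_simple h)
    · have hconj : s l * s i * (s l)⁻¹ = s i := by
        rw [← (hcomm l hl).eq, inv_simple, simple_mul_simple_cancel_right]
      have := h.2
      rw [hconj] at this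
      omega
  · omega

theorem mul_mem_minReps_of_commute {L' : Set B} (hm : m ∈ minReps cs L)
    (hcomm : ∀ i ∈ L', ∀ l ∈ L, Commute (s i) (s l))
    (hne : ∀ i ∈ L', ∀ l ∈ L, s i ≠ s l)
    {x : W} (hx : x ∈ parab cs L') : m * x ∈ minReps cs L := by
  induction hx using cs.parab_induction with
  | one => simpa using hm
  | mul x _ c hc _ ih =>
    rw [← mul_assoc]
    exact mul_simple_mem_minReps ih (hcomm c hc) (hne c hc)

end MinReps

end CoxeterSystem

namespace GoodSetup

open CoxeterSystem

variable {cs : CoxeterSystem M W} {I J K : Set B} {σ : W → W} (h : GoodSetup cs I J K σ)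
include h

local prefix:100 "s " => cs.simple
local prefix:100 "ℓ " => cs.length

theorem sigma_one : σ 1 = 1 := by
  have := h.mulSigma 1 (one_mem _) 1 (one_mem _)
  rw [mul_one] at this
  exact mul_eq_left.1 this.symm

theorem sigma_mem {x : W} (hx : x ∈ parab cs I) : σ x ∈ parab cs J :=
  h.bijSigma.mapsTo hx

theorem simple_ne_simple {i j : B} (hi : i ∈ I) (hj : j ∈ J) : s i ≠ s j := by
  intro he
  have := (h.directProd (s i) (cs.simple_mem_parab hi) (s j) (cs.simple_mem_parab hj) 1
    (one_mem _) (by rw [he, mul_one, simple_mul_simple_self])).1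
  simpa [this] using cs.length_simple i

theorem exists_sigma_simple_eq {j : B} (hj : j ∈ J) : ∃ i ∈ I, σ (s i) = s j := by
  have himage {x : W} (hx : x ∈ parab cs I) :
      σ x ∈ parab cs {l | ∃ i ∈ I, σ (s i) = s l} := by
    induction hx using cs.parab_induction with
    | one => simp [h.sigma_one]
    | mul x hx c hc _ ih =>
      obtain ⟨l, -, hl⟩ := h.simpleSigma c hc
      rw [h.mulSigma x hx _ (cs.simple_mem_parab hc), hl]
      exact mul_mem ih (cs.simple_mem_parab ⟨c, hc, hl⟩)
  obtain ⟨x, hx, hσx⟩ := h.bijSigma.surjOn (cs.simple_mem_parab hj)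
  obtain ⟨l, ⟨i, hi, hil⟩, hlj⟩ :=
    cs.exists_simple_eq_of_simple_mem_parab (hσx ▸ himage hx)
  exact ⟨i, hi, hil.trans hlj⟩

theorem length_sigma {x : W} (hx : x ∈ parab cs I) : ℓ (σ x) = ℓ x := by
  refine le_antisymm ?_ ?_
  · induction hx using cs.parab_induction with
    | one => simp [h.sigma_one]
    | mul x hx c hc hasc ih =>
      obtain ⟨j, -, hj⟩ := h.simpleSigma c hc
      rw [h.mulSigma x hx _ (cs.simple_mem_parab hc), hj]
      have := cs.length_mul_le (σ x) (s j)
      have := cs.length_mul_simple x c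
      rw [length_simple] at *
      omega
  · suffices ∀ y ∈ parab cs J, ∀ x ∈ parab cs I, σ x = y → ℓ x ≤ ℓ y from
      this _ (h.sigma_mem hx) x hx rfl
    intro y hy
    induction hy using cs.parab_induction with
    | one =>
      intro x hx hσx
      rw [h.bijSigma.injOn hx (one_mem _) (hσx.trans h.sigma_one.symm)]
    | mul y _ j hj hasc ih =>
      intro x hx hσx
      obtain ⟨i, hi, hij⟩ := h.exists_sigma_simple_eq hj
      have := ih (x * s i) (mul_mem hx (cs.simple_mem_parab hi))
        (by rw [h.mulSigma x hx _ (cs.simple_mem_parab hi), hσx, hij,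
          simple_mul_simple_cancel_right])
      have := cs.length_mul_simple x i
      have := cs.length_mul_simple y j
      omega

theorem mul_sigma_mul_simple_mul_sigma {x : W} (hx : x ∈ parab cs I) {i : B} (hi : i ∈ I) :
    x * σ x * (s i * σ (s i)) = x * s i * σ (x * s i) := by
  have hcomm : Commute (σ x) (s i) :=
    (commute_of_mem_parab h.commIJ (cs.simple_mem_parab hi) (h.sigma_mem hx)).symm
  rw [h.mulSigma x hx _ (cs.simple_mem_parab hi), ← mul_assoc, mul_assoc x, hcomm.eq,
    ← mul_assoc, mul_assoc]

theorem inCoset_mul_simple {w v : W} (hv : inCoset cs I K σ w v) {k : B} (hk : k ∈ K) :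
    inCoset cs I K σ w (v * s k) := by
  obtain ⟨a, ha, x, hx, rfl⟩ := hv
  refine ⟨a * s k, mul_mem ha (cs.simple_mem_parab hk), x, hx, ?_⟩
  have hcomm : Commute (x * σ x) (s k) :=
    (commute_of_mem_parab h.commIK hx (cs.simple_mem_parab hk)).mul_left
      (commute_of_mem_parab h.commJK (h.sigma_mem hx) (cs.simple_mem_parab hk))
  rw [mul_assoc (w * a), hcomm.eq, ← mul_assoc, mul_assoc w]

theorem inCoset_mul_simple_mul_sigma {w v : W} (hv : inCoset cs I K σ w v) {i : B} (hi : i ∈ I) :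
    inCoset cs I K σ w (v * s i * σ (s i)) := by
  obtain ⟨a, ha, x, hx, rfl⟩ := hv
  refine ⟨a, ha, x * s i, mul_mem hx (cs.simple_mem_parab hi), ?_⟩
  rw [← h.mul_sigma_mul_simple_mul_sigma hx hi, mul_assoc _ (s i), mul_assoc (w * a)]

theorem length_lt_length_mul_sigma_simple {w₁ : W} (hw₁ : w₁ ∈ minReps cs J) {x : W}
    (hx : x ∈ parab cs I) {i : B} (hi : i ∈ I) (hasc : ℓ x < ℓ (x * s i)) :
    ℓ (w₁ * (x * σ x) * s i) < ℓ (w₁ * (x * σ x) * s i * σ (s i)) := by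
  have hxi : x * s i ∈ parab cs I := mul_mem hx (cs.simple_mem_parab hi)
  have hm : w₁ * (x * s i) ∈ minReps cs J :=
    mul_mem_minReps_of_commute hw₁ h.commIJ (fun _ hi _ hj => h.simple_ne_simple hi hj) hxi
  have e₁ : w₁ * (x * σ x) * s i = w₁ * (x * s i) * σ x := by
    simp only [mul_assoc]
    rw [(commute_of_mem_parab h.commIJ (cs.simple_mem_parab hi) (h.sigma_mem hx)).eq]
  have e₂ : w₁ * (x * σ x) * s i * σ (s i) = w₁ * (x * s i) * σ (x * s i) := by
    rw [mul_assoc _ (s i), mul_assoc w₁, h.mul_sigma_mul_simple_mul_sigma hx hi, mul_assoc w₁]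
  rw [e₂, e₁, length_mul_of_mem_minReps hm (h.sigma_mem hx),
    length_mul_of_mem_minReps hm (h.sigma_mem hxi), h.length_sigma hx, h.length_sigma hxi]
  omega

theorem exists_inCoset_bruhatLE_mul_sigma {w w₁ u : W} (hw₁ : w₁ ∈ minReps cs J)
    (hu : inCoset cs I K σ w u) (hle : BruhatLE cs u w₁) {x : W} (hx : x ∈ parab cs I) :
    ∃ v, inCoset cs I K σ w v ∧ BruhatLE cs v (w₁ * (x * σ x)) := by
  induction hx using cs.parab_induction with
  | one => exact ⟨u, hu, by rwa [h.sigma_one, mul_one, mul_one]⟩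
  | mul x hx i hi hasc ih =>
    obtain ⟨v, hv, hvle⟩ := ih
    have hasc' := h.length_lt_length_mul_sigma_simple hw₁ hx hi hasc
    have hv' := h.inCoset_mul_simple_mul_sigma hv hi
    rw [← h.mul_sigma_mul_simple_mul_sigma hx hi,
      show w₁ * (x * σ x * (s i * σ (s i))) = w₁ * (x * σ x) * s i * σ (s i) by
        simp only [mul_assoc]]
    obtain ⟨j, -, hj⟩ := h.simpleSigma i hi
    rw [hj] at hasc' hv' ⊢
    rcases hvle.le_mul_simple_or_mul_simple_le i with h₁ | h₁
    · exact ⟨v, hv, h₁.le_mul_simple hasc'⟩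
    · exact ⟨v * s i * s j, hv', h₁.mul_simple_le_mul_simple hasc'⟩

theorem exists_inCoset_bruhatLE_mul_of_mem_parab {w v z : W} (hv : inCoset cs I K σ w v)
    (hle : BruhatLE cs v z) {a : W} (ha : a ∈ parab cs K) :
    ∃ v', inCoset cs I K σ w v' ∧ BruhatLE cs v' (z * a) := by
  induction ha using cs.parab_induction with
  | one => exact ⟨v, hv, by rwa [mul_one]⟩
  | mul a _ k hk _ ih =>
    obtain ⟨v', hv', hle'⟩ := ih
    rw [← mul_assoc]
    rcases hle'.le_mul_simple_or_mul_simple_le k with h₁ | h₁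
    · exact ⟨v', hv', h₁⟩
    · exact ⟨v' * s k, h.inCoset_mul_simple hv' hk, h₁⟩

end GoodSetup

theorem statement_4_general (cs : CoxeterSystem M W) (I J K : Set B) (σ : W → W)
    (h : GoodSetup cs I J K σ) (w w₁ : W)
    (hw₁ : w₁ ∈ minReps cs (J ∪ K))
    (hle : leO cs I K σ w w₁) :
    ∀ w₂, inCoset cs I K σ w₁ w₂ → ∃ v, inCoset cs I K σ w v ∧ BruhatLE cs v w₂ := by
  rintro _ ⟨a, ha, x, hx, rfl⟩
  obtain ⟨u, hu, hule⟩ := hle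
  obtain ⟨v, hv, hvle⟩ :=
    h.exists_inCoset_bruhatLE_mul_sigma (fun j hj => hw₁ j (.inl hj)) hu hule hx
  have hcomm : Commute a (x * σ x) :=
    ((CoxeterSystem.commute_of_mem_parab h.commIK hx ha).mul_left
      (CoxeterSystem.commute_of_mem_parab h.commJK (h.sigma_mem hx) ha)).symm
  rw [mul_assoc, hcomm.eq, ← mul_assoc]
  exact h.exists_inCoset_bruhatLE_mul_of_mem_parab hv hvle ha

theorem statement_4 (cs : CoxeterSystem M W) (I J K : Set B) (σ : W → W)
    (h : GoodSetup cs I J K σ) (w w₁ : W)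
    (hw : w ∈ minReps cs (J ∪ K)) (hw₁ : w₁ ∈ minReps cs (J ∪ K))
    (hle : leO cs I K σ w w₁) :
    ∀ w₂, inCoset cs I K σ w₁ w₂ → ∃ v, inCoset cs I K σ w v ∧ BruhatLE cs v w₂ :=
  statement_4_general cs I J K σ h w w₁ hw₁ hle

end BruhatSetup
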